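/- arXiv:1902.03694 — 3 statements merged into one kernel-verified Lean document; each statement's English description precedes it below -/
import Mathlib

section
/- Let 0 < μ ≤ L, let f be μ-strongly convex with L-Lipschitz gradient on ℝⁿ, with minimizer x⋆, and take step size s = μ/(100L²). Then the iterates of the explicit Euler scheme for the high-resolution NAG-SC ODE satisfy, for every k ≥ 0, f(x_k) − f(x⋆) ≤ 3L‖x₀ − x⋆‖² (1 − μ/(80L))^k. -/
/-!
With `a = √s` and `m = √(μ s) = μ / (10 L)`, the energy
`E(x, v) = f x - f x⋆ + ‖v‖² / 4 + ‖v + 2√μ (x - x⋆) + a ∇f(x)‖² / 4`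
contracts by the factor `1 - m / 8 = 1 - μ / (80 L)` at every step of the scheme. The second
vector only moves by `-a (1 + m) ∇f(x_k)`, and after expanding both squared norms every cross term
is controlled by the descent lemma, strong convexity, monotonicity and Lipschitz continuity of the
gradient, and `‖∇f‖² ≤ 4 L (f - f x⋆)`. Since `v₀` and `a ∇f(x₀)` are `O(√μ ‖x₀ - x⋆‖)`, the
initial energy is at most `3 L ‖x₀ - x⋆‖²`, and `f x - f x⋆ ≤ E`.
-/

open scoped RealInnerProductSpace

theorem norm_add_add_sq_le {E : Type*} [SeminormedAddCommGroup E] (u v w : E) :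
    ‖u + v + w‖ ^ 2 ≤ 3 * (‖u‖ ^ 2 + ‖v‖ ^ 2 + ‖w‖ ^ 2) := by
  nlinarith [norm_add₃_le (a := u) (b := v) (c := w), norm_nonneg (u + v + w),
    sq_nonneg (‖u‖ - ‖v‖), sq_nonneg (‖u‖ - ‖w‖), sq_nonneg (‖v‖ - ‖w‖)]

section InnerProductSpace

variable {E : Type*} [NormedAddCommGroup E] [InnerProductSpace ℝ E]

theorem two_mul_inner_le_norm_sq_add_norm_sq (u w : E) : 2 * ⟪u, w⟫ ≤ ‖u‖ ^ 2 + ‖w‖ ^ 2 := by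
  linarith [norm_sub_sq_real u w, sq_nonneg ‖u - w‖]

theorem norm_smul_sq_real (c : ℝ) (u : E) : ‖c • u‖ ^ 2 = c ^ 2 * ‖u‖ ^ 2 := by
  rw [norm_smul, mul_pow, Real.norm_eq_abs, sq_abs]

theorem norm_smul_sub_smul_sub_smul_sq (α β γ : ℝ) (u v w : E) :
    ‖α • u - β • v - γ • w‖ ^ 2 = α ^ 2 * ‖u‖ ^ 2 + β ^ 2 * ‖v‖ ^ 2 + γ ^ 2 * ‖w‖ ^ 2
      - 2 * (α * β) * ⟪u, v⟫ - 2 * (α * γ) * ⟪u, w⟫ + 2 * (β * γ) * ⟪v, w⟫ := by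
  simp only [← real_inner_self_eq_norm_sq, inner_sub_left, inner_sub_right,
    real_inner_smul_left, real_inner_smul_right, real_inner_comm u v, real_inner_comm u w,
    real_inner_comm v w]
  ring

theorem mul_sq_norm_le_inner_gradient_sub {f : E → ℝ} {f' : E → E} {μ : ℝ}
    (hsc : ∀ z w, f w ≥ f z + ⟪f' z, w - z⟫ + μ / 2 * ‖w - z‖ ^ 2) (x y : E) :
    μ * ‖y - x‖ ^ 2 ≤ ⟪f' y - f' x, y - x⟫ := by
  have hxy := hsc x y
  have hyx := hsc y x
  rw [← neg_sub y x, inner_neg_right, norm_neg] at hyx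
  rw [inner_sub_left]
  linarith

end InnerProductSpace

section Gradient

variable {E : Type*} [NormedAddCommGroup E] [InnerProductSpace ℝ E] [CompleteSpace E]
  {f : E → ℝ} {f' : E → E} {L : ℝ}

theorem IsLocalMin.hasGradientAt_eq_zero {x g : E} (h : IsLocalMin f x)
    (hf : HasGradientAt f g x) : g = 0 :=
  (InnerProductSpace.toDual ℝ E).map_eq_zero_iff.1 (h.hasFDerivAt_eq_zero hf.hasFDerivAt)

theorem le_add_inner_add_mul_norm_sq_of_lipschitz_gradient
    (hgrad : ∀ z, HasGradientAt f (f' z) z) (hLip : ∀ z w, ‖f' z - f' w‖ ≤ L * ‖z - w‖)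
    (hL : 0 ≤ L) (x y : E) : f y ≤ f x + ⟪f' x, y - x⟫ + L * ‖y - x‖ ^ 2 := by
  have hmvt : ‖f y - f x - ⟪f' x, y - x⟫‖ ≤ L * ‖y - x‖ * ‖y - x‖ := by
    refine Convex.norm_image_sub_le_of_norm_hasFDerivWithin_le'
      (f' := fun z => InnerProductSpace.toDual ℝ E (f' z)) (s := segment ℝ x y)
      (φ := InnerProductSpace.toDual ℝ E (f' x)) (C := L * ‖y - x‖)
      (fun z _ => (hgrad z).hasFDerivAt.hasFDerivWithinAt) (fun z hz => ?_)
      (convex_segment x y) (left_mem_segment ℝ x y) (right_mem_segment ℝ x y)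
    rw [← map_sub, LinearIsometryEquiv.norm_map]
    refine (hLip z x).trans (mul_le_mul_of_nonneg_left ?_ hL)
    rw [segment_eq_image'] at hz
    obtain ⟨t, ht, rfl⟩ := hz
    rw [add_sub_cancel_left, norm_smul, Real.norm_eq_abs, abs_of_nonneg ht.1]
    exact mul_le_of_le_one_left (norm_nonneg _) ht.2
  linarith [(abs_le.1 hmvt).2]

theorem sq_norm_gradient_le_of_lipschitz_gradient
    (hgrad : ∀ z, HasGradientAt f (f' z) z) (hLip : ∀ z w, ‖f' z - f' w‖ ≤ L * ‖z - w‖)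
    (hL : 0 < L) {xstar : E} (hmin : ∀ z, f xstar ≤ f z) (z : E) :
    ‖f' z‖ ^ 2 ≤ 4 * L * (f z - f xstar) := by
  have h := le_add_inner_add_mul_norm_sq_of_lipschitz_gradient hgrad hLip hL.le z
    (z - (2 * L)⁻¹ • f' z)
  rw [sub_sub_cancel_left, inner_neg_right, norm_neg, real_inner_smul_right,
    real_inner_self_eq_norm_sq, norm_smul_sq_real] at h
  have hquad : L * ((2 * L)⁻¹ ^ 2 * ‖f' z‖ ^ 2) - (2 * L)⁻¹ * ‖f' z‖ ^ 2
      = -(‖f' z‖ ^ 2 / (4 * L)) := by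
    field_simp
    ring
  have hdesc : ‖f' z‖ ^ 2 / (4 * L) ≤ f z - f xstar := by linarith [hmin (z - (2 * L)⁻¹ • f' z)]
  rwa [div_le_iff₀ (by positivity), mul_comm] at hdesc

end Gradient

theorem nagsc_stepSize_relations {μ L s : ℝ} (hμ : 0 < μ) (hμL : μ ≤ L)
    (hs : s = μ / (100 * L ^ 2)) :
    √s * L = √μ / 10 ∧ 10 * L * √s ^ 2 = √(μ * s) ∧ μ = 10 * L * √(μ * s) ∧ √(μ * s) ≤ 1 / 10 := by
  have hL : 0 < L := hμ.trans_le hμL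
  have hsqrt : √s = √μ / (10 * L) := by
    rw [hs, Real.sqrt_div' _ (by positivity), show (100 : ℝ) * L ^ 2 = (10 * L) ^ 2 by ring,
      Real.sqrt_sq (by positivity)]
  have hm : √(μ * s) = μ / (10 * L) := by
    rw [Real.sqrt_mul hμ.le, hsqrt, ← mul_div_assoc, Real.mul_self_sqrt hμ.le]
  refine ⟨?_, ?_, ?_, ?_⟩
  · rw [hsqrt]
    field_simp
  · rw [hsqrt, hm, div_pow, Real.sq_sqrt hμ.le]
    field_simp
  · rw [hm]
    field_simp
  · rw [hm, div_le_div_iff₀ (by positivity) (by norm_num)]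
    linarith

theorem nagsc_step_eq {E : Type*} [AddCommGroup E] [Module ℝ E]
    {x v x' v' xstar g g' : E} {a c m : ℝ} (hca : c * a = m) (hx : x' - x = a • v)
    (hv : v' - v = -((2 * m) • v) - a • (g' - g) - (a * (1 + m)) • g) :
    v' = (1 - 2 * m) • v - a • (g' - g) - (a * (1 + m)) • g ∧
      v' + (2 * c) • (x' - xstar) + a • g'
        = v + (2 * c) • (x - xstar) + a • g - (a * (1 + m)) • g := by
  have hv' : v' = (1 - 2 * m) • v - a • (g' - g) - (a * (1 + m)) • g := by
    rw [← sub_add_cancel v' v, hv]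
    module
  refine ⟨hv', ?_⟩
  rw [hv', ← sub_add_cancel x' x, hx, ← hca]
  module

/- `F, P, Q, R, W, D` play the roles of `f x - f x⋆`, `‖v‖²`, `‖∇f x‖²`, `‖x - x⋆‖²`,
`‖v + 2√μ (x - x⋆) + a ∇f x‖²`, `‖∇f x' - ∇f x‖²`, and `F', V', W'` of the three energy terms
at the next iterate. -/
theorem nagscEnergy_scalar_contraction {L a m F F' P Q R W D V' W' b₁ b₂ c₃ c₄ : ℝ}
    (hL : 0 < L) (hm : 10 * L * a ^ 2 = m) (hm₁ : m ≤ 1 / 10)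
    (hF : 0 ≤ F) (hP : 0 ≤ P) (hQ : 0 ≤ Q) (hR : 0 ≤ R)
    (hV' : V' = (1 - 2 * m) ^ 2 * P + a ^ 2 * D + a ^ 2 * (1 + m) ^ 2 * Q
      - 2 * (1 - 2 * m) * b₂ - 2 * (1 - 2 * m) * (1 + m) * b₁ + 2 * a ^ 2 * (1 + m) * c₃)
    (hW' : W' = W - 2 * (1 + m) * b₁ - 4 * m * (1 + m) * c₄
      - 2 * a ^ 2 * (1 + m) * Q + a ^ 2 * (1 + m) ^ 2 * Q)
    (hdescent : F' ≤ F + b₁ + L * a ^ 2 * P)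
    (hconvex : F + 5 * m * L * R ≤ c₄)
    (hmono : 0 ≤ b₂)
    (hlip : D ≤ L ^ 2 * a ^ 2 * P)
    (hQF : Q ≤ 4 * L * F)
    (hc₃ : 2 * c₃ ≤ D + Q)
    (hb₁ : 2 * m * b₁ ≤ m ^ 2 * P + a ^ 2 * Q)
    (hW : W ≤ 3 * (P + 40 * m * L * R + a ^ 2 * Q)) :
    F' + V' / 4 + W' / 4 ≤ (1 - m / 8) * (F + P / 4 + W / 4) := by
  subst hV' hW' hm
  have hm₀ : 0 ≤ 10 * L * a ^ 2 := by positivity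
  nlinarith [mul_le_mul_of_nonneg_left hlip (by positivity : 0 ≤ a ^ 2 * (2 + 10 * L * a ^ 2)),
    mul_le_mul_of_nonneg_left hc₃ (by positivity : 0 ≤ a ^ 2 * (1 + 10 * L * a ^ 2)),
    mul_nonneg hm₀ hP, mul_nonneg (mul_nonneg hm₀ hm₀) hP,
    mul_nonneg (mul_nonneg (mul_nonneg hm₀ hm₀) hR) hL.le,
    mul_nonneg (sq_nonneg a) hQ, mul_nonneg (mul_nonneg (sq_nonneg a) hm₀) hQ]

section Scheme

variable {E : Type*} [NormedAddCommGroup E] [InnerProductSpace ℝ E]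
  {f : E → ℝ} {f' : E → E} {xstar : E} {μ L s : ℝ}

noncomputable def nagscEnergy (f : E → ℝ) (f' : E → E) (xstar : E) (μ s : ℝ) (x v : E) : ℝ :=
  f x - f xstar + ‖v‖ ^ 2 / 4 + ‖v + (2 * √μ) • (x - xstar) + √s • f' x‖ ^ 2 / 4

theorem sub_le_nagscEnergy (x v : E) : f x - f xstar ≤ nagscEnergy f f' xstar μ s x v := by
  unfold nagscEnergy
  exact le_add_of_le_of_nonneg (le_add_of_nonneg_right (by positivity)) (by positivity)

variable [CompleteSpace E]

theorem nagscEnergy_step_le (hμ : 0 < μ) (hμL : μ ≤ L)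
    (hgrad : ∀ z, HasGradientAt f (f' z) z) (hLip : ∀ z w, ‖f' z - f' w‖ ≤ L * ‖z - w‖)
    (hsc : ∀ z w, f w ≥ f z + ⟪f' z, w - z⟫ + μ / 2 * ‖w - z‖ ^ 2)
    (hmin : ∀ z, f xstar ≤ f z) (hs : s = μ / (100 * L ^ 2)) {x v x' v' : E}
    (hx : x' - x = √s • v)
    (hv : v' - v = -((2 * √(μ * s)) • v) - √s • (f' x' - f' x) - (√s * (1 + √(μ * s))) • f' x) :
    nagscEnergy f f' xstar μ s x' v' ≤ (1 - μ / (80 * L)) * nagscEnergy f f' xstar μ s x v := by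
  have hL : 0 < L := hμ.trans_le hμL
  obtain ⟨-, hma, hμm, hm₁⟩ := nagsc_stepSize_relations hμ hμL hs
  unfold nagscEnergy
  set a := √s
  set m := √(μ * s)
  have hρ : 1 - μ / (80 * L) = 1 - m / 8 := by
    rw [hμm]
    field_simp
    ring
  set g := f' x
  have hμa : √μ * a = m := (Real.sqrt_mul hμ.le s).symm
  obtain ⟨hv', hw'⟩ := nagsc_step_eq (xstar := xstar) hμa hx hv
  rw [hρ, hw']
  refine nagscEnergy_scalar_contraction (F' := f x' - f xstar) (Q := ‖g‖ ^ 2)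
    (R := ‖x - xstar‖ ^ 2) (D := ‖f' x' - g‖ ^ 2) (b₁ := a * ⟪v, g⟫)
    (b₂ := a * ⟪v, f' x' - g⟫) (c₃ := ⟪f' x' - g, g⟫) (c₄ := ⟪x - xstar, g⟫)
    hL hma hm₁ (sub_nonneg.2 (hmin x)) (sq_nonneg _) (sq_nonneg _) (sq_nonneg _) ?_ ?_ ?_ ?_ ?_ ?_
    (sq_norm_gradient_le_of_lipschitz_gradient hgrad hLip hL hmin x)
    (two_mul_inner_le_norm_sq_add_norm_sq _ g) ?_ ?_
  · rw [hv', norm_smul_sub_smul_sub_smul_sq]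
    ring
  · rw [norm_sub_sq_real, real_inner_smul_right, norm_smul_sq_real, inner_add_left,
      inner_add_left, real_inner_smul_left, real_inner_smul_left, real_inner_self_eq_norm_sq,
      ← hμa]
    ring
  · have h := le_add_inner_add_mul_norm_sq_of_lipschitz_gradient hgrad hLip hL.le x x'
    rw [hx, real_inner_smul_right, norm_smul_sq_real, real_inner_comm] at h
    linarith
  · have h := hsc x xstar
    rw [← neg_sub x xstar, inner_neg_right, norm_neg, real_inner_comm, hμm] at h
    linarith
  · have h := mul_sq_norm_le_inner_gradient_sub hsc x x'
    rw [hx, real_inner_smul_right, real_inner_comm] at h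
    exact (mul_nonneg hμ.le (sq_nonneg _)).trans h
  · have h := hLip x' x
    rw [hx, norm_smul, Real.norm_eq_abs, abs_of_nonneg (Real.sqrt_nonneg s)] at h
    calc ‖f' x' - g‖ ^ 2 ≤ (L * (a * ‖v‖)) ^ 2 := pow_le_pow_left₀ (norm_nonneg _) h 2
      _ = L ^ 2 * a ^ 2 * ‖v‖ ^ 2 := by ring
  · have h := two_mul_inner_le_norm_sq_add_norm_sq (m • v) (a • g)
    rw [real_inner_smul_left, real_inner_smul_right, norm_smul_sq_real, norm_smul_sq_real] at h
    linarith
  · have h := norm_add_add_sq_le v ((2 * √μ) • (x - xstar)) (a • g)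
    rw [norm_smul_sq_real, norm_smul_sq_real, mul_pow, Real.sq_sqrt hμ.le] at h
    rw [hμm] at h ⊢
    linarith

theorem nagscEnergy_initial_le (hμ : 0 < μ) (hμL : μ ≤ L)
    (hgrad : ∀ z, HasGradientAt f (f' z) z) (hLip : ∀ z w, ‖f' z - f' w‖ ≤ L * ‖z - w‖)
    (hmin : ∀ z, f xstar ≤ f z) (hs : s = μ / (100 * L ^ 2)) (x₀ : E) :
    nagscEnergy f f' xstar μ s x₀ (-((2 * √s / (1 + √(μ * s))) • f' x₀))
      ≤ 3 * L * ‖x₀ - xstar‖ ^ 2 := by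
  have hL : 0 < L := hμ.trans_le hμL
  obtain ⟨haL, -⟩ := nagsc_stepSize_relations hμ hμL hs
  have hstar : f' xstar = 0 :=
    IsLocalMin.hasGradientAt_eq_zero (Filter.Eventually.of_forall hmin) (hgrad xstar)
  set r := ‖x₀ - xstar‖
  set q := √μ * r
  have hF : f x₀ - f xstar ≤ L * r ^ 2 := by
    have h := le_add_inner_add_mul_norm_sq_of_lipschitz_gradient hgrad hLip hL.le xstar x₀
    rw [hstar, inner_zero_left] at h
    linarith
  have hg : √s * ‖f' x₀‖ ≤ q / 10 := by
    have h := hLip x₀ xstar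
    rw [hstar, sub_zero] at h
    calc √s * ‖f' x₀‖ ≤ √s * (L * r) := mul_le_mul_of_nonneg_left h (Real.sqrt_nonneg s)
      _ = q / 10 := by rw [← mul_assoc, haL]; ring
  have hv : ‖-((2 * √s / (1 + √(μ * s))) • f' x₀)‖ ≤ q / 5 := by
    have hm₀ : 0 ≤ √(μ * s) := Real.sqrt_nonneg _
    rw [norm_neg, norm_smul, Real.norm_eq_abs, abs_of_nonneg (by positivity)]
    calc 2 * √s / (1 + √(μ * s)) * ‖f' x₀‖ ≤ 2 * √s * ‖f' x₀‖ := by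
          gcongr
          exact div_le_self (by positivity) (by linarith)
      _ ≤ q / 5 := by linarith
  have hw : ‖-((2 * √s / (1 + √(μ * s))) • f' x₀) + (2 * √μ) • (x₀ - xstar) + √s • f' x₀‖
      ≤ 23 / 10 * q := by
    refine norm_add₃_le.trans ?_
    rw [norm_smul, norm_smul, Real.norm_eq_abs, Real.norm_eq_abs, abs_of_nonneg (by positivity),
      abs_of_nonneg (Real.sqrt_nonneg s)]
    linarith
  have hq : q ^ 2 = μ * r ^ 2 := by rw [mul_pow, Real.sq_sqrt hμ.le]
  unfold nagscEnergy
  nlinarith [pow_le_pow_left₀ (norm_nonneg _) hv 2, pow_le_pow_left₀ (norm_nonneg _) hw 2,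
    mul_le_mul_of_nonneg_right hμL (sq_nonneg r)]

end Scheme

theorem stmt1
    {n : ℕ} (μ L : ℝ) (hμ : 0 < μ) (hμL : μ ≤ L)
    (f : EuclideanSpace ℝ (Fin n) → ℝ)
    (f' : EuclideanSpace ℝ (Fin n) → EuclideanSpace ℝ (Fin n))
    (hgrad : ∀ z, HasGradientAt f (f' z) z)
    (hLip : ∀ z w, ‖f' z - f' w‖ ≤ L * ‖z - w‖)
    (hsc : ∀ z w, f w ≥ f z + ⟪f' z, w - z⟫ + μ / 2 * ‖w - z‖ ^ 2)
    (xstar : EuclideanSpace ℝ (Fin n)) (hmin : ∀ z, f xstar ≤ f z)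
    (s : ℝ) (hs : s = μ / (100 * L ^ 2))
    (x v : ℕ → EuclideanSpace ℝ (Fin n))
    (hv0 : v 0 = -((2 * Real.sqrt s / (1 + Real.sqrt (μ * s))) • f' (x 0)))
    (hx : ∀ k : ℕ, x (k + 1) - x k = Real.sqrt s • v k)
    (hv : ∀ k : ℕ, v (k + 1) - v k = -((2 * Real.sqrt (μ * s)) • v k)
      - Real.sqrt s • (f' (x (k + 1)) - f' (x k))
      - (Real.sqrt s * (1 + Real.sqrt (μ * s))) • f' (x k))
    : ∀ k : ℕ, f (x k) - f xstar ≤ 3 * L * ‖x 0 - xstar‖ ^ 2 * (1 - μ / (80 * L)) ^ k := by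
  have hL : 0 < L := hμ.trans_le hμL
  have hρ : 0 ≤ 1 - μ / (80 * L) := by
    rw [sub_nonneg, div_le_one (by positivity)]
    linarith
  intro k
  calc f (x k) - f xstar ≤ nagscEnergy f f' xstar μ s (x k) (v k) := sub_le_nagscEnergy _ _
    _ ≤ (1 - μ / (80 * L)) ^ k * nagscEnergy f f' xstar μ s (x 0) (v 0) :=
        le_geom (u := fun k => nagscEnergy f f' xstar μ s (x k) (v k)) hρ k fun j _ =>
          nagscEnergy_step_le hμ hμL hgrad hLip hsc hmin hs (hx j) (hv j)
    _ ≤ (1 - μ / (80 * L)) ^ k * (3 * L * ‖x 0 - xstar‖ ^ 2) := by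
        rw [hv0]
        exact mul_le_mul_of_nonneg_left
          (nagscEnergy_initial_le hμ hμL hgrad hLip hmin hs (x 0)) (pow_nonneg hρ k)
    _ = 3 * L * ‖x 0 - xstar‖ ^ 2 * (1 - μ / (80 * L)) ^ k := mul_comm _ _
end

section
/- Let 0 < μ ≤ L, let f be μ-strongly convex with L-Lipschitz gradient on ℝⁿ, with minimizer x⋆, and take step size s = μ/(36L²). Then the iterates of the explicit Euler scheme for the high-resolution heavy-ball ODE satisfy, for every k ≥ 0, f(x_k) − f(x⋆) ≤ 3L‖x₀ − x⋆‖² (1 − μ/(48L))^k. -/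
/-!
With `a = √(μ s) = μ / (6 L)` and `r = √s`, so that `L r² = a / 6`, the energy
`E(x, v) = (1 + a) (f x - f x⋆) + ‖v‖² / 4 + ‖v + 12 L r (x - x⋆)‖² / 4`
contracts by the factor `1 - a / 8` at every step of the scheme. Expanding one step, the descent
inequality `f y ≤ f x + ⟪f' x, y - x⟫ + L ‖y - x‖²`, the strong-convexity bounds around `x⋆` and
`‖f' x‖² ≤ 4 L (f x - f x⋆)` reduce the contraction to a polynomial inequality in a handful of
scalars, which AM–GM closes. Finally `E(x₀, v₀) ≤ 3 (1 + a) L ‖x₀ - x⋆‖²` and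
`(1 + a) (f x - f x⋆) ≤ E(x, v)`.
-/

open scoped RealInnerProductSpace

section InnerProductSpace

variable {E : Type*} [NormedAddCommGroup E] [InnerProductSpace ℝ E]

lemma norm_smul_add_smul_sq (α β : ℝ) (u z : E) :
    ‖α • u + β • z‖ ^ 2 = α ^ 2 * ‖u‖ ^ 2 + 2 * α * β * ⟪u, z⟫ + β ^ 2 * ‖z‖ ^ 2 := by
  rw [norm_add_sq_real, norm_smul, norm_smul, real_inner_smul_left, real_inner_smul_right,
    mul_pow, mul_pow, Real.norm_eq_abs, Real.norm_eq_abs, sq_abs, sq_abs]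
  ring

lemma norm_smul_add_smul_add_smul_sq (α β γ : ℝ) (u z y : E) :
    ‖α • u + β • z + γ • y‖ ^ 2 = α ^ 2 * ‖u‖ ^ 2 + β ^ 2 * ‖z‖ ^ 2 + γ ^ 2 * ‖y‖ ^ 2
      + 2 * α * β * ⟪u, z⟫ + 2 * α * γ * ⟪u, y⟫ + 2 * β * γ * ⟪z, y⟫ := by
  rw [norm_add_sq_real, norm_smul_add_smul_sq, norm_smul, inner_add_left, real_inner_smul_left,
    real_inner_smul_left, real_inner_smul_right, real_inner_smul_right, mul_pow,
    Real.norm_eq_abs, sq_abs]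
  ring

lemma real_inner_sq_le (u w : E) : ⟪u, w⟫ ^ 2 ≤ ‖u‖ ^ 2 * ‖w‖ ^ 2 := by
  rw [← mul_pow, ← sq_abs]
  exact pow_le_pow_left₀ (abs_nonneg _) (abs_real_inner_le_norm u w) 2

variable {f : E → ℝ} {f' : E → E} {μ L : ℝ} {xstar : E}

/-- Needs no differentiability, at the price of the constant `L` instead of `L / 2`. -/
theorem le_add_inner_add_mul_norm_sq (hμ : 0 ≤ μ) (hLip : ∀ z w, ‖f' z - f' w‖ ≤ L * ‖z - w‖)
    (hsc : ∀ z w, f w ≥ f z + ⟪f' z, w - z⟫ + μ / 2 * ‖w - z‖ ^ 2) (z y : E) :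
    f y ≤ f z + ⟪f' z, y - z⟫ + L * ‖y - z‖ ^ 2 := by
  have hmono : ⟪f' y - f' z, y - z⟫ ≤ L * ‖y - z‖ ^ 2 :=
    calc _ ≤ ‖f' y - f' z‖ * ‖y - z‖ := real_inner_le_norm _ _
      _ ≤ L * ‖y - z‖ * ‖y - z‖ := by gcongr; exact hLip y z
      _ = L * ‖y - z‖ ^ 2 := by ring
  have h := hsc y z
  rw [← neg_sub y z, inner_neg_right, norm_neg] at h
  rw [inner_sub_left] at hmono
  nlinarith [sq_nonneg ‖y - z‖]

theorem norm_sq_le_four_mul_sub_min (hL : 0 < L)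
    (hdesc : ∀ z y, f y ≤ f z + ⟪f' z, y - z⟫ + L * ‖y - z‖ ^ 2)
    (hmin : ∀ z, f xstar ≤ f z) (z : E) :
    ‖f' z‖ ^ 2 ≤ 4 * L * (f z - f xstar) := by
  have h := hdesc z (z - (2 * L)⁻¹ • f' z)
  rw [sub_sub_cancel_left, inner_neg_right, norm_neg, real_inner_smul_right,
    real_inner_self_eq_norm_sq, norm_smul, mul_pow, Real.norm_eq_abs, sq_abs] at h
  have hcoef : -((2 * L)⁻¹ * ‖f' z‖ ^ 2) + L * ((2 * L)⁻¹ ^ 2 * ‖f' z‖ ^ 2)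
      = -(‖f' z‖ ^ 2 / (4 * L)) := by
    field_simp; ring
  have key : ‖f' z‖ ^ 2 / (4 * L) ≤ f z - f xstar := by linarith [hmin (z - (2 * L)⁻¹ • f' z)]
  exact (div_le_iff₀' (by positivity)).mp key

theorem grad_eq_zero_of_forall_le (hL : 0 < L)
    (hdesc : ∀ z y, f y ≤ f z + ⟪f' z, y - z⟫ + L * ‖y - z‖ ^ 2)
    (hmin : ∀ z, f xstar ≤ f z) : f' xstar = 0 := by
  simpa using norm_sq_le_four_mul_sub_min hL hdesc hmin xstar

theorem sub_min_le_inner_sub (hsc : ∀ z w, f w ≥ f z + ⟪f' z, w - z⟫ + μ / 2 * ‖w - z‖ ^ 2)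
    (z : E) : f z - f xstar ≤ ⟪f' z, z - xstar⟫ - μ / 2 * ‖z - xstar‖ ^ 2 := by
  have h := hsc z xstar
  rw [← neg_sub z xstar, inner_neg_right, norm_neg] at h
  linarith

theorem mul_norm_sq_le_sub_min (hsc : ∀ z w, f w ≥ f z + ⟪f' z, w - z⟫ + μ / 2 * ‖w - z‖ ^ 2)
    (h0 : f' xstar = 0) (z : E) : μ / 2 * ‖z - xstar‖ ^ 2 ≤ f z - f xstar := by
  have h := hsc xstar z
  rw [h0, inner_zero_left] at h
  linarith

/-- Discrete counterpart of the Lyapunov function of the high-resolution heavy-ball ODE, written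
with `a = √(μ s)` and `c = 12 L √s`. -/
noncomputable def hbLyapunov (f : E → ℝ) (xstar : E) (a c : ℝ) (x v : E) : ℝ :=
  (1 + a) * (f x - f xstar) + ‖v‖ ^ 2 / 4 + ‖v + c • (x - xstar)‖ ^ 2 / 4

lemma hbLyapunov_step_poly_nonpos {a L V W H t F q p : ℝ}
    (hL : 0 < L) (ha : 0 < a) (ha6 : a ≤ 1 / 6) (hV : 0 ≤ V) (hW : 0 ≤ W) (hH : 0 ≤ H)
    (hq : q ^ 2 ≤ H * V) (hp : 6 * L * p ^ 2 ≤ a * V * W) (ht : 6 * a * L * W ≤ t)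
    (hHt : H ≤ 2 * a / 3 * t - 2 * a ^ 2 * L * W) (hF : F ≤ t - 3 * a * L * W) :
    a * (1 + a) * q + a * (7 * a - 5) / 6 * V + (1 + a) ^ 2 / 2 * H - a * (1 + a) * t
      + a / 8 * (1 + a) * F + a / 16 * V + 3 / 4 * a ^ 2 * L * W + 3 / 4 * a * L * p ≤ 0 := by
  have amgm {x A B : ℝ} (hA : 0 ≤ A) (hB : 0 ≤ B) (h : x ^ 2 ≤ 4 * A * B) : x ≤ A + B := by
    nlinarith [sq_nonneg (A - B), sq_nonneg (A + B - x), sq_nonneg (A + B + x)]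
  have hq' : a * (1 + a) * q ≤ 3 / 10 * (1 + a) * H + 5 / 6 * a ^ 2 * (1 + a) * V := by
    refine amgm (by positivity) (by positivity) ?_
    nlinarith [mul_le_mul_of_nonneg_left hq (show (0:ℝ) ≤ a ^ 2 * (1 + a) ^ 2 by positivity)]
  have hp' : 3 / 4 * a * L * p ≤ 3 / 16 * a * V + 1 / 8 * a ^ 2 * L * W := by
    refine amgm (by positivity) (by positivity) ?_
    nlinarith [mul_le_mul_of_nonneg_left hp (show (0:ℝ) ≤ 3 / 32 * a ^ 2 * L by positivity)]
  have hF' := mul_le_mul_of_nonneg_left hF (show 0 ≤ a / 8 * (1 + a) by positivity)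
  have hH' := mul_le_mul_of_nonneg_left hHt
    (show 0 ≤ (1 + a) ^ 2 / 2 + 3 / 10 * (1 + a) by positivity)
  have ht' := mul_le_mul_of_nonneg_left ht
    (show 0 ≤ 7 / 8 * a * (1 + a) - 2 * a / 3 * ((1 + a) ^ 2 / 2 + 3 / 10 * (1 + a)) by
      nlinarith)
  have hV' : a * ((7 * a - 5) / 6 + 5 * a / 6 * (1 + a) + 1 / 4) * V ≤ 0 :=
    mul_nonpos_of_nonpos_of_nonneg (by nlinarith) hV
  have hW' : a ^ 2 * L * (7 / 8 - 45 / 8 * (1 + a) + 3 / 5 * (1 + a) + (1 + a) ^ 2) * W ≤ 0 :=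
    mul_nonpos_of_nonpos_of_nonneg
      (mul_nonpos_of_nonneg_of_nonpos (by positivity) (by nlinarith)) hW
  linarith

variable {a r : ℝ}

lemma mul_sub_le_hbLyapunov (c : ℝ) (x v : E) :
    (1 + a) * (f x - f xstar) ≤ hbLyapunov f xstar a c x v := by
  unfold hbLyapunov
  linarith [sq_nonneg ‖v‖, sq_nonneg ‖v + c • (x - xstar)‖]

lemma hbLyapunov_succ_sub_le (ha : 0 < a) (hr : L * r ^ 2 = a / 6)
    (hdesc : ∀ z y, f y ≤ f z + ⟪f' z, y - z⟫ + L * ‖y - z‖ ^ 2) (x v : E) :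
    hbLyapunov f xstar a (12 * L * r) (x + r • v) ((1 - 2 * a) • v - (r * (1 + a)) • f' x)
        - (1 - a / 8) * hbLyapunov f xstar a (12 * L * r) x v
      ≤ a * (1 + a) * (r * ⟪v, f' x⟫) + a * (7 * a - 5) / 6 * ‖v‖ ^ 2
        + (1 + a) ^ 2 / 2 * (r ^ 2 * ‖f' x‖ ^ 2) - a * (1 + a) * ⟪f' x, x - xstar⟫
        + a / 8 * (1 + a) * (f x - f xstar) + a / 16 * ‖v‖ ^ 2
        + 3 / 4 * a ^ 2 * L * ‖x - xstar‖ ^ 2 + 3 / 4 * a * L * (r * ⟪v, x - xstar⟫) := by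
  have hfx' : f (x + r • v) - f xstar ≤ f x - f xstar + r * ⟪v, f' x⟫ + a / 6 * ‖v‖ ^ 2 := by
    have h := hdesc x (x + r • v)
    rw [add_sub_cancel_left, real_inner_smul_right, real_inner_comm, norm_smul, mul_pow,
      Real.norm_eq_abs, sq_abs] at h
    linear_combination h + ‖v‖ ^ 2 * hr
  have hv' : ‖(1 - 2 * a) • v - (r * (1 + a)) • f' x‖ ^ 2 = (1 - 2 * a) ^ 2 * ‖v‖ ^ 2
      - 2 * (1 - 2 * a) * (1 + a) * (r * ⟪v, f' x⟫) + (1 + a) ^ 2 * (r ^ 2 * ‖f' x‖ ^ 2) := by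
    rw [sub_eq_add_neg, ← neg_smul, norm_smul_add_smul_sq]
    ring
  have hvx' : ‖(1 - 2 * a) • v - (r * (1 + a)) • f' x + (12 * L * r) • (x + r • v - xstar)‖ ^ 2
      = ‖v‖ ^ 2 + (1 + a) ^ 2 * (r ^ 2 * ‖f' x‖ ^ 2) + 24 * a * L * ‖x - xstar‖ ^ 2
        - 2 * (1 + a) * (r * ⟪v, f' x⟫) + 24 * L * (r * ⟪v, x - xstar⟫)
        - 4 * a * (1 + a) * ⟪f' x, x - xstar⟫ := by
    have hcr : 12 * L * r * r = 2 * a := by linear_combination 12 * hr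
    rw [show (1 - 2 * a) • v - (r * (1 + a)) • f' x + (12 * L * r) • (x + r • v - xstar)
        = (1 : ℝ) • v + (-(r * (1 + a))) • f' x + (12 * L * r) • (x - xstar) by
      linear_combination (norm := module) hcr • v, norm_smul_add_smul_add_smul_sq]
    linear_combination (144 * L * ‖x - xstar‖ ^ 2 - 24 * (1 + a) * ⟪f' x, x - xstar⟫) * hr
  have hvx : ‖v + (12 * L * r) • (x - xstar)‖ ^ 2
      = ‖v‖ ^ 2 + 24 * a * L * ‖x - xstar‖ ^ 2 + 24 * L * (r * ⟪v, x - xstar⟫) := by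
    rw [← one_smul ℝ v, norm_smul_add_smul_sq, one_smul]
    linear_combination (144 * L * ‖x - xstar‖ ^ 2) * hr
  have hfx'' := mul_le_mul_of_nonneg_left hfx' (show 0 ≤ 1 + a by positivity)
  unfold hbLyapunov
  rw [hv', hvx', hvx]
  linarith

theorem hbLyapunov_step_le (hL : 0 < L) (ha : 0 < a) (ha6 : a ≤ 1 / 6) (hμ : μ = 6 * a * L)
    (hr : L * r ^ 2 = a / 6)
    (hdesc : ∀ z y, f y ≤ f z + ⟪f' z, y - z⟫ + L * ‖y - z‖ ^ 2)
    (hsc : ∀ z w, f w ≥ f z + ⟪f' z, w - z⟫ + μ / 2 * ‖w - z‖ ^ 2)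
    (hmin : ∀ z, f xstar ≤ f z) (x v : E) :
    hbLyapunov f xstar a (12 * L * r) (x + r • v) ((1 - 2 * a) • v - (r * (1 + a)) • f' x)
      ≤ (1 - a / 8) * hbLyapunov f xstar a (12 * L * r) x v := by
  have hμ2 : μ / 2 = 3 * a * L := by rw [hμ]; ring
  have hupper := sub_min_le_inner_sub hsc x (xstar := xstar)
  have hlower := mul_norm_sq_le_sub_min hsc (grad_eq_zero_of_forall_le hL hdesc hmin) x
  have hgrad := norm_sq_le_four_mul_sub_min hL hdesc hmin x
  rw [hμ2] at hupper hlower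
  have hq : (r * ⟪v, f' x⟫) ^ 2 ≤ r ^ 2 * ‖f' x‖ ^ 2 * ‖v‖ ^ 2 := by
    nlinarith [real_inner_sq_le v (f' x), sq_nonneg r]
  have hp : 6 * L * (r * ⟪v, x - xstar⟫) ^ 2 ≤ a * ‖v‖ ^ 2 * ‖x - xstar‖ ^ 2 := by
    nlinarith [real_inner_sq_le v (x - xstar)]
  have hHt : r ^ 2 * ‖f' x‖ ^ 2
      ≤ 2 * a / 3 * ⟪f' x, x - xstar⟫ - 2 * a ^ 2 * L * ‖x - xstar‖ ^ 2 :=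
    calc r ^ 2 * ‖f' x‖ ^ 2 ≤ r ^ 2 * (4 * L * (f x - f xstar)) := by gcongr
      _ ≤ r ^ 2 * (4 * L * (⟪f' x, x - xstar⟫ - 3 * a * L * ‖x - xstar‖ ^ 2)) := by gcongr
      _ = _ := by linear_combination (4 * ⟪f' x, x - xstar⟫ - 12 * a * L * ‖x - xstar‖ ^ 2) * hr
  have hpoly := hbLyapunov_step_poly_nonpos hL ha ha6 (sq_nonneg ‖v‖) (sq_nonneg ‖x - xstar‖)
    (by positivity) hq hp (by linarith) hHt hupper
  linarith [hbLyapunov_succ_sub_le ha hr hdesc x v (xstar := xstar)]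

theorem hbLyapunov_init_le (hL : 0 < L) (ha : 0 < a) (ha6 : a ≤ 1 / 6) (hμ : 0 ≤ μ)
    (hr : L * r ^ 2 = a / 6)
    (hdesc : ∀ z y, f y ≤ f z + ⟪f' z, y - z⟫ + L * ‖y - z‖ ^ 2)
    (hsc : ∀ z w, f w ≥ f z + ⟪f' z, w - z⟫ + μ / 2 * ‖w - z‖ ^ 2)
    (hmin : ∀ z, f xstar ≤ f z) (x₀ : E) :
    hbLyapunov f xstar a (12 * L * r) x₀ (-(2 * r / (1 + a)) • f' x₀)
      ≤ (1 + a) * (3 * L * ‖x₀ - xstar‖ ^ 2) := by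
  have h0 := grad_eq_zero_of_forall_le hL hdesc hmin
  have hF : f x₀ - f xstar ≤ L * ‖x₀ - xstar‖ ^ 2 := by
    have h := hdesc xstar x₀
    rw [h0, inner_zero_left] at h
    linarith
  have hG : ‖f' x₀‖ ^ 2 ≤ 4 * L ^ 2 * ‖x₀ - xstar‖ ^ 2 := by
    nlinarith [norm_sq_le_four_mul_sub_min hL hdesc hmin x₀]
  have ht : 0 ≤ ⟪f' x₀, x₀ - xstar⟫ := by
    have h : f x₀ - f xstar ≤ ⟪f' x₀, x₀ - xstar⟫ - μ / 2 * ‖x₀ - xstar‖ ^ 2 :=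
      sub_min_le_inner_sub hsc x₀
    nlinarith [hmin x₀, mul_nonneg hμ (sq_nonneg ‖x₀ - xstar‖)]
  have hk : (2 * r / (1 + a)) ^ 2 ≤ 4 * r ^ 2 := by
    rw [div_pow, mul_pow]
    norm_num
    exact div_le_self (by positivity) (one_le_pow₀ (by linarith))
  have hkc : 0 ≤ 2 * r / (1 + a) * (12 * L * r) := by
    rw [show 2 * r / (1 + a) * (12 * L * r) = 24 * L * r ^ 2 / (1 + a) by ring]
    positivity
  have hkG : (2 * r / (1 + a)) ^ 2 * ‖f' x₀‖ ^ 2 ≤ 8 * a / 3 * L * ‖x₀ - xstar‖ ^ 2 :=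
    calc _ ≤ 4 * r ^ 2 * (4 * L ^ 2 * ‖x₀ - xstar‖ ^ 2) := by gcongr
      _ = _ := by linear_combination 16 * L * ‖x₀ - xstar‖ ^ 2 * hr
  have hc : (12 * L * r) ^ 2 = 24 * a * L := by linear_combination 144 * L * hr
  have hF' := mul_le_mul_of_nonneg_left hF (show 0 ≤ 1 + a by positivity)
  unfold hbLyapunov
  rw [norm_smul_add_smul_sq, norm_smul, mul_pow, Real.norm_eq_abs, sq_abs, neg_sq, hc]
  nlinarith [mul_nonneg hkc ht, mul_nonneg (mul_nonneg ha.le hL.le) (sq_nonneg ‖x₀ - xstar‖)]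

end InnerProductSpace

theorem stmt4_general
    {n : ℕ} (μ L : ℝ) (hμ : 0 < μ) (hμL : μ ≤ L)
    (f : EuclideanSpace ℝ (Fin n) → ℝ)
    (f' : EuclideanSpace ℝ (Fin n) → EuclideanSpace ℝ (Fin n))
    (hLip : ∀ z w, ‖f' z - f' w‖ ≤ L * ‖z - w‖)
    (hsc : ∀ z w, f w ≥ f z + ⟪f' z, w - z⟫ + μ / 2 * ‖w - z‖ ^ 2)
    (xstar : EuclideanSpace ℝ (Fin n)) (hmin : ∀ z, f xstar ≤ f z)
    (s : ℝ) (hs : s = μ / (36 * L ^ 2))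
    (x v : ℕ → EuclideanSpace ℝ (Fin n))
    (hv0 : v 0 = -((2 * Real.sqrt s / (1 + Real.sqrt (μ * s))) • f' (x 0)))
    (hx : ∀ k : ℕ, x (k + 1) - x k = Real.sqrt s • v k)
    (hv : ∀ k : ℕ, v (k + 1) - v k = -((2 * Real.sqrt (μ * s)) • v k)
      - (Real.sqrt s * (1 + Real.sqrt (μ * s))) • f' (x k))
    : ∀ k : ℕ, f (x k) - f xstar ≤ 3 * L * ‖x 0 - xstar‖ ^ 2 * (1 - μ / (48 * L)) ^ k := by
  have hL : 0 < L := hμ.trans_le hμL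
  set a := μ / (6 * L)
  set r := Real.sqrt s
  have hμa : μ = 6 * a * L := by simp only [a]; field_simp
  have ha : 0 < a := by positivity
  have ha6 : a ≤ 1 / 6 := by nlinarith
  have hr : L * r ^ 2 = a / 6 := by
    rw [Real.sq_sqrt (by rw [hs]; positivity), hs, hμa]; field_simp; norm_num
  have hsqrt : Real.sqrt (μ * s) = a := by
    rw [show μ * s = a ^ 2 by rw [hs, hμa]; field_simp; ring, Real.sqrt_sq ha.le]
  have hdesc := le_add_inner_add_mul_norm_sq hμ.le hLip hsc
  have hstep (k : ℕ) : hbLyapunov f xstar a (12 * L * r) (x (k + 1)) (v (k + 1))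
      ≤ (1 - a / 8) * hbLyapunov f xstar a (12 * L * r) (x k) (v k) := by
    have hxk : x (k + 1) = x k + r • v k := eq_add_of_sub_eq' (hx k)
    have hvk : v (k + 1) = (1 - 2 * a) • v k - (r * (1 + a)) • f' (x k) := by
      rw [← sub_add_cancel (v (k + 1)) (v k), hv, hsqrt]; module
    rw [hxk, hvk]
    exact hbLyapunov_step_le hL ha ha6 hμa hr hdesc hsc hmin (x k) (v k)
  have hv0' : v 0 = -(2 * r / (1 + a)) • f' (x 0) := by rw [hv0, hsqrt, neg_smul]
  have hinit := hbLyapunov_init_le hL ha ha6 hμ.le hr hdesc hsc hmin (x 0)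
  rw [← hv0'] at hinit
  intro k
  have hE := le_geom (u := fun k => hbLyapunov f xstar a (12 * L * r) (x k) (v k))
    (by linarith) k (fun k _ => hstep k)
  have hbound := (mul_sub_le_hbLyapunov _ (x k) (v k)).trans
    (hE.trans (mul_le_mul_of_nonneg_left hinit (by bound)))
  rw [show 1 - μ / (48 * L) = 1 - a / 8 by rw [hμa]; field_simp; ring]
  exact le_of_mul_le_mul_left (by linarith) (by positivity : 0 < 1 + a)

theorem stmt4
    {n : ℕ} (μ L : ℝ) (hμ : 0 < μ) (hμL : μ ≤ L)
    (f : EuclideanSpace ℝ (Fin n) → ℝ)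
    (f' : EuclideanSpace ℝ (Fin n) → EuclideanSpace ℝ (Fin n))
    (hgrad : ∀ z, HasGradientAt f (f' z) z)
    (hLip : ∀ z w, ‖f' z - f' w‖ ≤ L * ‖z - w‖)
    (hsc : ∀ z w, f w ≥ f z + ⟪f' z, w - z⟫ + μ / 2 * ‖w - z‖ ^ 2)
    (xstar : EuclideanSpace ℝ (Fin n)) (hmin : ∀ z, f xstar ≤ f z)
    (s : ℝ) (hs : s = μ / (36 * L ^ 2))
    (x v : ℕ → EuclideanSpace ℝ (Fin n))
    (hv0 : v 0 = -((2 * Real.sqrt s / (1 + Real.sqrt (μ * s))) • f' (x 0)))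
    (hx : ∀ k : ℕ, x (k + 1) - x k = Real.sqrt s • v k)
    (hv : ∀ k : ℕ, v (k + 1) - v k = -((2 * Real.sqrt (μ * s)) • v k)
      - (Real.sqrt s * (1 + Real.sqrt (μ * s))) • f' (x k))
    : ∀ k : ℕ, f (x k) - f xstar ≤ 3 * L * ‖x 0 - xstar‖ ^ 2 * (1 - μ / (48 * L)) ^ k :=
  stmt4_general μ L hμ hμL f f' hLip hsc xstar hmin s hs x v hv0 hx hv
end

section
/- Let 0 < μ ≤ L, let f be μ-strongly convex with L-Lipschitz gradient on ℝⁿ, with minimizer x⋆, and take step size s = 1/L. Then the iterates of the implicit Euler scheme for the high-resolution heavy-ball ODE satisfy, for every k ≥ 0, f(x_k) − f(x⋆) ≤ 15L‖x₀ − x⋆‖² / (4 (1 + (1/4)√(μ/L))^k). -/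
open scoped RealInnerProductSpace

/-!
A Lyapunov argument. With `m = √μ` and `a = √(μs)`, the energy
`E_k = (1 + a) (f x_k - f x⋆) + ‖v_k‖² / 4 + ‖v_k + 2m (x_k - x⋆)‖² / 4`
dominates `f x_k - f x⋆` and, for every step size, contracts by the factor `1 + a/4` at each
implicit step: after eliminating `v_k` through the scheme, this follows from strong convexity
between `x_{k+1}` and `x_k`, strong convexity between `x_{k+1}` and `x⋆`, and two squares.
For `s = 1/L`, the choice of `v₀`, the bound `‖∇f x₀‖ ≤ L ‖x₀ - x⋆‖` and `a ≤ 1` give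
`E_0 ≤ 7/2 · L ‖x₀ - x⋆‖²`.
-/

lemma le_div_pow_of_mul_succ_le {c : ℝ} (hc : 0 < c) {E : ℕ → ℝ}
    (h : ∀ k, c * E (k + 1) ≤ E k) : ∀ k, E k ≤ E 0 / c ^ k
  | 0 => by simp
  | k + 1 => by
    rw [pow_succ, ← div_div, le_div_iff₀ hc, mul_comm]
    exact (h k).trans (le_div_pow_of_mul_succ_le hc h k)

section HeavyBall

variable {H : Type*} [NormedAddCommGroup H] [InnerProductSpace ℝ H]

lemma norm_smul_add_smul_sq_real (α β : ℝ) (u w : H) :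
    ‖α • u + β • w‖ ^ 2 = α ^ 2 * ‖u‖ ^ 2 + 2 * α * β * ⟪u, w⟫ + β ^ 2 * ‖w‖ ^ 2 := by
  rw [norm_add_sq_real, norm_smul, norm_smul, real_inner_smul_left, real_inner_smul_right]
  simp only [Real.norm_eq_abs, mul_pow, sq_abs]
  ring

noncomputable def heavyBallEnergy (m a : ℝ) (f : H → ℝ) (xstar x v : H) : ℝ :=
  (1 + a) * (f x - f xstar) + ‖v‖ ^ 2 / 4 + ‖v + (2 * m) • (x - xstar)‖ ^ 2 / 4

lemma sub_le_heavyBallEnergy {m a : ℝ} (ha : 0 ≤ a) {f : H → ℝ} {xstar x : H} (hmin : f xstar ≤ f x)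
    (v : H) : f x - f xstar ≤ heavyBallEnergy m a f xstar x v := by
  unfold heavyBallEnergy
  linarith [mul_nonneg ha (sub_nonneg.2 hmin), sq_nonneg ‖v‖,
    sq_nonneg ‖v + (2 * m) • (x - xstar)‖]

lemma heavyBallEnergy_step {m b : ℝ} (hm : 0 ≤ m) (hb : 0 ≤ b) {f : H → ℝ} {f' : H → H} {xstar : H}
    (hsc : ∀ z w, f w ≥ f z + ⟪f' z, w - z⟫ + m ^ 2 / 2 * ‖w - z‖ ^ 2)
    (hmin : ∀ z, f xstar ≤ f z) {x x' v v' : H} (hx : x' - x = b • v')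
    (hv : v' - v = -((2 * (m * b)) • v') - (b * (1 + m * b)) • f' x') :
    (1 + m * b / 4) * heavyBallEnergy m (m * b) f xstar x' v' ≤ heavyBallEnergy m (m * b) f xstar x v := by
  set a := m * b
  set c := b * (1 + a)
  set g := f' x'
  set e := x' - xstar
  set w := v' + (2 * m) • e
  have ha : 0 ≤ a := mul_nonneg hm hb
  have hxx' : x - x' = (-b) • v' := by rw [neg_smul, ← hx]; abel
  have hv_eq : v = (1 + 2 * a) • v' + c • g := by
    rw [← sub_sub_self v' v, hv]; module
  have hnv : ‖v‖ ^ 2 = (1 + 2 * a) ^ 2 * ‖v'‖ ^ 2 + 2 * (1 + 2 * a) * c * ⟪v', g⟫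
      + c ^ 2 * ‖g‖ ^ 2 := by
    rw [hv_eq, norm_smul_add_smul_sq_real]
  have hnw : ‖v + (2 * m) • (x - xstar)‖ ^ 2
      = ‖w‖ ^ 2 + 2 * c * (⟪v', g⟫ + 2 * m * ⟪e, g⟫) + c ^ 2 * ‖g‖ ^ 2 := by
    have : v + (2 * m) • (x - xstar) = w + c • g := by
      rw [hv_eq, show x - xstar = (x' - xstar) + (x - x') by abel, hxx']; module
    rw [this, norm_add_sq_real, norm_smul, real_inner_smul_right, inner_add_left,
      real_inner_smul_left, Real.norm_eq_abs, mul_pow, sq_abs]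
    ring
  have hdesc : a ^ 2 / 2 * ‖v'‖ ^ 2 ≤ f x - f x' + b * ⟪v', g⟫ := by
    have h := hsc x' x
    rw [hxx', real_inner_smul_right, norm_smul, Real.norm_eq_abs, mul_pow, sq_abs,
      real_inner_comm] at h
    nlinarith
  have hgap : f x' - f xstar + m ^ 2 / 2 * ‖e‖ ^ 2 ≤ ⟪e, g⟫ := by
    have h := hsc x' xstar
    rw [← neg_sub, inner_neg_right, norm_neg, real_inner_comm] at h
    linarith
  have hw : ‖w‖ ^ 2 ≤ 2 * ‖v'‖ ^ 2 + 8 * m ^ 2 * ‖e‖ ^ 2 := by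
    have h := parallelogram_law_with_norm ℝ v' ((2 * m) • e)
    rw [norm_smul, Real.norm_eq_abs, abs_of_nonneg (by positivity)] at h
    nlinarith [sq_nonneg ‖v' - (2 * m) • e‖]
  have hcross : 0 ≤ 4 * a ^ 2 * ‖v'‖ ^ 2 + 4 * a * c * ⟪v', g⟫ + c ^ 2 * ‖g‖ ^ 2 := by
    linarith [norm_smul_add_smul_sq_real (2 * a) c v' g, sq_nonneg ‖(2 * a) • v' + c • g‖]
  have hF : 0 ≤ f x' - f xstar := sub_nonneg.2 (hmin x')
  unfold heavyBallEnergy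
  rw [hnv, hnw]
  nlinarith [mul_le_mul_of_nonneg_left hdesc (by positivity : (0 : ℝ) ≤ 1 + a),
    mul_le_mul_of_nonneg_left hgap (by positivity : (0 : ℝ) ≤ a * (1 + a)),
    mul_le_mul_of_nonneg_left hw (by positivity : (0 : ℝ) ≤ a / 16),
    mul_nonneg (by positivity : (0 : ℝ) ≤ 3 * a * (1 + a) / 4) hF,
    mul_nonneg (by positivity : (0 : ℝ) ≤ a ^ 2 * m ^ 2 / 2) (sq_nonneg ‖e‖),
    mul_nonneg (by positivity : (0 : ℝ) ≤ (1 + a) * a ^ 2 / 2 + 13 * a / 16) (sq_nonneg ‖v'‖),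
    hcross]

lemma heavyBallEnergy_init_le {m b L : ℝ} (hm : 0 ≤ m) (hb : 0 ≤ b) (hbL : b ^ 2 * L = 1)
    (hmL : m ^ 2 ≤ L) {f : H → ℝ} {f' : H → H} {xstar x₀ : H}
    (hsc : f xstar ≥ f x₀ + ⟪f' x₀, xstar - x₀⟫ + m ^ 2 / 2 * ‖xstar - x₀‖ ^ 2)
    (hg : ‖f' x₀‖ ≤ L * ‖x₀ - xstar‖) :
    heavyBallEnergy m (m * b) f xstar x₀ (-((2 * b / (1 + m * b)) • f' x₀))
      ≤ 7 / 2 * L * ‖x₀ - xstar‖ ^ 2 := by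
  set a := m * b
  set t := (1 + a)⁻¹
  set g := f' x₀
  set r := x₀ - xstar
  have ha : 0 ≤ a := mul_nonneg hm hb
  have ha1 : a ≤ 1 := by nlinarith [mul_le_mul_of_nonneg_left hmL (sq_nonneg b)]
  have hL : 0 ≤ L := (sq_nonneg m).trans hmL
  have hta : (1 + a) * t = 1 := mul_inv_cancel₀ (by positivity)
  have ht : 0 ≤ t := by positivity
  have ht1 : t ≤ 1 := inv_le_one_of_one_le₀ (by linarith)
  have hR : 0 ≤ ‖r‖ ^ 2 := sq_nonneg _
  have hgap : f x₀ - f xstar ≤ ⟪r, g⟫ - m ^ 2 / 2 * ‖r‖ ^ 2 := by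
    rw [← neg_sub, inner_neg_right, norm_neg, real_inner_comm] at hsc
    linarith
  have hinner : ⟪r, g⟫ ≤ L * ‖r‖ ^ 2 := by
    calc ⟪r, g⟫ ≤ ‖r‖ * ‖g‖ := real_inner_le_norm r g
      _ ≤ ‖r‖ * (L * ‖r‖) := by gcongr
      _ = L * ‖r‖ ^ 2 := by ring
  have hg2 : ‖g‖ ^ 2 ≤ L ^ 2 * ‖r‖ ^ 2 := by
    rw [← mul_pow]; gcongr
  have hE : heavyBallEnergy m a f xstar x₀ (-((2 * b / (1 + a)) • g))
      = (1 + a) * (f x₀ - f xstar) + 2 * b ^ 2 * t ^ 2 * ‖g‖ ^ 2 - 2 * a * t * ⟪r, g⟫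
        + m ^ 2 * ‖r‖ ^ 2 := by
    rw [heavyBallEnergy, ← neg_smul, norm_smul, norm_smul_add_smul_sq_real, real_inner_comm,
      Real.norm_eq_abs, mul_pow, sq_abs, div_eq_mul_inv]
    ring
  calc heavyBallEnergy m a f xstar x₀ (-((2 * b / (1 + a)) • g))
      ≤ (1 + a) * (⟪r, g⟫ - m ^ 2 / 2 * ‖r‖ ^ 2) + 2 * b ^ 2 * t ^ 2 * ‖g‖ ^ 2
        - 2 * a * t * ⟪r, g⟫ + m ^ 2 * ‖r‖ ^ 2 := by rw [hE]; gcongr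
    _ = (1 + a ^ 2) * t * ⟪r, g⟫ + (1 - a) * m ^ 2 / 2 * ‖r‖ ^ 2
        + 2 * b ^ 2 * t ^ 2 * ‖g‖ ^ 2 := by linear_combination (-(1 + a) * ⟪r, g⟫) * hta
    _ ≤ L * ‖r‖ ^ 2 + L / 2 * ‖r‖ ^ 2 + 2 * L * ‖r‖ ^ 2 := by
      gcongr ?_ + ?_ + ?_
      · have hcoef : (1 + a ^ 2) * t ≤ 1 := by nlinarith
        calc (1 + a ^ 2) * t * ⟪r, g⟫ ≤ (1 + a ^ 2) * t * (L * ‖r‖ ^ 2) := by gcongr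
          _ ≤ L * ‖r‖ ^ 2 := mul_le_of_le_one_left (by positivity) hcoef
      · nlinarith [mul_nonneg ha (sq_nonneg m)]
      · calc 2 * b ^ 2 * t ^ 2 * ‖g‖ ^ 2 ≤ 2 * b ^ 2 * 1 * (L ^ 2 * ‖r‖ ^ 2) := by
              gcongr; exact pow_le_one₀ ht ht1
          _ = 2 * L * ‖r‖ ^ 2 := by linear_combination (2 * L * ‖r‖ ^ 2) * hbL
    _ = 7 / 2 * L * ‖r‖ ^ 2 := by ring

end HeavyBall

theorem stmt5
    {n : ℕ} (μ L : ℝ) (hμ : 0 < μ) (hμL : μ ≤ L)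
    (f : EuclideanSpace ℝ (Fin n) → ℝ)
    (f' : EuclideanSpace ℝ (Fin n) → EuclideanSpace ℝ (Fin n))
    (hgrad : ∀ z, HasGradientAt f (f' z) z)
    (hLip : ∀ z w, ‖f' z - f' w‖ ≤ L * ‖z - w‖)
    (hsc : ∀ z w, f w ≥ f z + ⟪f' z, w - z⟫ + μ / 2 * ‖w - z‖ ^ 2)
    (xstar : EuclideanSpace ℝ (Fin n)) (hmin : ∀ z, f xstar ≤ f z)
    (s : ℝ) (hs : s = 1 / L)
    (x v : ℕ → EuclideanSpace ℝ (Fin n))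
    (hv0 : v 0 = -((2 * Real.sqrt s / (1 + Real.sqrt (μ * s))) • f' (x 0)))
    (hx : ∀ k : ℕ, x (k + 1) - x k = Real.sqrt s • v (k + 1))
    (hv : ∀ k : ℕ, v (k + 1) - v k = -((2 * Real.sqrt (μ * s)) • v (k + 1))
      - (Real.sqrt s * (1 + Real.sqrt (μ * s))) • f' (x (k + 1)))
    : ∀ k : ℕ, f (x k) - f xstar ≤ 15 * L * ‖x 0 - xstar‖ ^ 2 / (4 * (1 + (1 / 4) * Real.sqrt (μ / L)) ^ k) := by
  intro k
  have hL : 0 < L := hμ.trans_le hμL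
  set m := Real.sqrt μ
  set b := Real.sqrt s
  have hm2 : m ^ 2 = μ := Real.sq_sqrt hμ.le
  have hbL : b ^ 2 * L = 1 := by
    rw [Real.sq_sqrt (by rw [hs]; positivity), hs, one_div_mul_cancel hL.ne']
  have hmb : Real.sqrt (μ * s) = m * b := Real.sqrt_mul hμ.le s
  have hmb' : Real.sqrt (μ / L) = m * b := by rw [← hmb, hs, mul_one_div]
  rw [hmb] at hv0 hv
  rw [← hm2] at hsc
  have hgrad0 : f' xstar = 0 := by
    simpa using (IsLocalMin.hasFDerivAt_eq_zero (Filter.Eventually.of_forall hmin)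
      (hgrad xstar).hasFDerivAt)
  have hE0 := heavyBallEnergy_init_le (Real.sqrt_nonneg μ) (Real.sqrt_nonneg s) hbL (hm2.trans_le hμL)
    (hsc (x 0) xstar) (by simpa [hgrad0] using hLip (x 0) xstar)
  rw [← hv0] at hE0
  have hdecay := le_div_pow_of_mul_succ_le (c := 1 + m * b / 4) (by positivity)
    (E := fun k ↦ heavyBallEnergy m (m * b) f xstar (x k) (v k))
    (fun k ↦ heavyBallEnergy_step (Real.sqrt_nonneg μ) (Real.sqrt_nonneg s) hsc hmin (hx k) (hv k)) k
  calc f (x k) - f xstar ≤ heavyBallEnergy m (m * b) f xstar (x k) (v k) :=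
        sub_le_heavyBallEnergy (by positivity) (hmin _) _
    _ ≤ heavyBallEnergy m (m * b) f xstar (x 0) (v 0) / (1 + m * b / 4) ^ k := hdecay
    _ ≤ 15 / 4 * L * ‖x 0 - xstar‖ ^ 2 / (1 + m * b / 4) ^ k := by
        gcongr
        linarith [mul_nonneg hL.le (sq_nonneg ‖x 0 - xstar‖)]
    _ = 15 * L * ‖x 0 - xstar‖ ^ 2 / (4 * (1 + (1 / 4) * Real.sqrt (μ / L)) ^ k) := by
        rw [hmb']; ring
end
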